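/- For every integer m ≥ 2 and every strong transitive partition {V_1,...,V_k} of the complete bipartite graph K_{m,m-1}, one has k ≤ 2; that is, K_{m,m-1} admits no strong transitive partition of size at least 3. -/
import Mathlib


namespace StrongTrans

variable {V : Type*}

/-- The degree of a vertex (number of neighbours). -/
noncomputable def deg (G : SimpleGraph V) (v : V) : ℕ := Nat.card {w // G.Adj v w}

/-- `A` dominates `B`: every vertex of `B` has a neighbour in `A`. -/
def Dominates (G : SimpleGraph V) (A B : Set V) : Prop :=
  ∀ y ∈ B, ∃ x ∈ A, G.Adj x y

/-- `A` strongly dominates `B`: every vertex `y ∈ B` has a neighbour `x ∈ A`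
with `deg x ≥ deg y`. -/
def StronglyDominates (G : SimpleGraph V) (A B : Set V) : Prop :=
  ∀ y ∈ B, ∃ x ∈ A, G.Adj x y ∧ deg G y ≤ deg G x

/-- A transitive partition of `G` into `k` nonempty parts `P 0, …, P (k-1)`:
the parts are pairwise disjoint, cover `V`, and earlier parts dominate later ones. -/
structure IsTransitivePartition (G : SimpleGraph V) {k : ℕ} (P : Fin k → Set V) : Prop where
  nonempty : ∀ i, (P i).Nonempty
  pairwiseDisjoint : ∀ i j, i ≠ j → Disjoint (P i) (P j)
  covers : ∀ v, ∃ i, v ∈ P i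
  dominates : ∀ i j, i < j → Dominates G (P i) (P j)

/-- A strong transitive partition of `G` into `k` nonempty parts:
earlier parts strongly dominate later ones. -/
structure IsStrongTransitivePartition (G : SimpleGraph V) {k : ℕ} (P : Fin k → Set V) : Prop where
  nonempty : ∀ i, (P i).Nonempty
  pairwiseDisjoint : ∀ i j, i ≠ j → Disjoint (P i) (P j)
  covers : ∀ v, ∃ i, v ∈ P i
  stronglyDominates : ∀ i j, i < j → StronglyDominates G (P i) (P j)

/-- The transitivity `Tr(G)`: maximum size of a transitive partition. -/
noncomputable def transitivity (G : SimpleGraph V) : ℕ :=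
  sSup {k | ∃ P : Fin k → Set V, IsTransitivePartition G P}

/-- The strong transitivity `Tr_st(G)`: maximum size of a strong transitive partition. -/
noncomputable def strongTransitivity (G : SimpleGraph V) : ℕ :=
  sSup {k | ∃ P : Fin k → Set V, IsStrongTransitivePartition G P}



lemma adj_iff_l {A B : Type*} (a : A) (w : A ⊕ B) :
    (completeBipartiteGraph A B).Adj (Sum.inl a) w ↔ ∃ b, w = Sum.inr b := by
  cases w <;> simp [completeBipartiteGraph]

lemma adj_iff_r {A B : Type*} (b : B) (w : A ⊕ B) :
    (completeBipartiteGraph A B).Adj (Sum.inr b) w ↔ ∃ a, w = Sum.inl a := by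
  cases w <;> simp [completeBipartiteGraph]

lemma deg_inl {A B : Type*} (a : A) :
    deg (completeBipartiteGraph A B) (Sum.inl a) = Nat.card B := by
  apply Nat.card_congr
  refine ⟨fun w => w.1.getRight ?_, fun b => ⟨Sum.inr b, by simp [completeBipartiteGraph]⟩, ?_, ?_⟩
  · obtain ⟨b, hb⟩ := (adj_iff_l a w.1).mp w.2; simp [hb]
  · rintro ⟨w, hw⟩
    obtain ⟨b, hb⟩ := (adj_iff_l a w).mp hw
    subst hb; rfl
  · intro b; rfl

lemma deg_inr {A B : Type*} (b : B) :
    deg (completeBipartiteGraph A B) (Sum.inr b) = Nat.card A := by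
  apply Nat.card_congr
  refine ⟨fun w => w.1.getLeft ?_, fun a => ⟨Sum.inl a, by simp [completeBipartiteGraph]⟩, ?_, ?_⟩
  · obtain ⟨a, ha⟩ := (adj_iff_r b w.1).mp w.2; simp [ha]
  · rintro ⟨w, hw⟩
    obtain ⟨a, ha⟩ := (adj_iff_r b w).mp hw
    subst ha; rfl
  · intro a; rfl

/-- for every `m ≥ 2`, every strong transitive partition of
`K_{m,m-1}` has size at most `2`. -/
theorem strong_transitive_partition_completeBipartiteGraph_le_two
    (m : ℕ) (hm : 2 ≤ m) (k : ℕ)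
    (P : Fin k → Set (Fin m ⊕ Fin (m - 1)))
    (hP : IsStrongTransitivePartition (completeBipartiteGraph (Fin m) (Fin (m - 1))) P) :
    k ≤ 2 := by
  set G := completeBipartiteGraph (Fin m) (Fin (m - 1)) with hG
  by_contra h
  push_neg at h
  have hdl : ∀ a : Fin m, deg G (Sum.inl a) = m - 1 := by
    intro a; rw [hG, deg_inl]; simp
  have hdr : ∀ b : Fin (m-1), deg G (Sum.inr b) = m := by
    intro b; rw [hG, deg_inr]; simp
  have key : ∀ (b : Fin (m-1)) (x : Fin m ⊕ Fin (m-1)),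
      G.Adj x (Sum.inr b) → ¬ (deg G (Sum.inr b) ≤ deg G x) := by
    intro b x hadj hle
    have : ∃ a, x = Sum.inl a := by
      cases x with
      | inl a => exact ⟨a, rfl⟩
      | inr b' => simp [hG, completeBipartiteGraph] at hadj
    obtain ⟨a, rfl⟩ := this
    rw [hdl, hdr] at hle
    omega
  have h0 : (0:ℕ) < k := by omega
  have h1 : (1:ℕ) < k := by omega
  obtain ⟨y, hy⟩ := hP.nonempty ⟨2, h⟩
  have h12 : (⟨1, h1⟩ : Fin k) < ⟨2, h⟩ := by simp [Fin.lt_def]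
  obtain ⟨x, hx, hadj, hle⟩ := hP.stronglyDominates ⟨1, h1⟩ ⟨2, h⟩ h12 y hy
  cases y with
  | inr b => exact key b x hadj hle
  | inl a =>
    obtain ⟨b, rfl⟩ : ∃ b, x = Sum.inr b := by
      cases x with
      | inl a' => simp [hG, completeBipartiteGraph] at hadj
      | inr b => exact ⟨b, rfl⟩
    have h01 : (⟨0, h0⟩ : Fin k) < ⟨1, h1⟩ := by simp [Fin.lt_def]
    obtain ⟨x0, hx0, hadj0, hle0⟩ := hP.stronglyDominates ⟨0, h0⟩ ⟨1, h1⟩ h01 _ hx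
    exact key b x0 hadj0 hle0

end StrongTrans
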